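/- Let H = H₁ ⊗ H₂ ⊗ ⋯ ⊗ Hₙ be a tensor product of finite-dimensional complex inner product spaces, each of dimension ≥ 2, and let ψ₁, ψ₂, ψ₃ ∈ H be linearly independent. Then there exists x ∈ {1,2,3} and a fully product vector φ = a₁ ⊗ ⋯ ⊗ aₙ such that ⟨ψᵢ, φ⟩ = 0 for both i ≠ x and ⟨ψₓ, φ⟩ ≠ 0. -/

import Mathlib

/-- The fully product vector `a₁ ⊗ ⋯ ⊗ aₙ` in the multipartite space
`EuclideanSpace ℂ (∀ j, ι j)` (which carries the induced tensor inner product). -/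
noncomputable def prodVec {n : ℕ} {ι : Fin n → Type*} [∀ j, Fintype (ι j)]
    (a : ∀ j, EuclideanSpace ℂ (ι j)) :
    EuclideanSpace ℂ (∀ j, ι j) :=
  WithLp.toLp 2 (fun f => ∏ j, a j (f j))

/-!
The vector `(⟪ψ i, a₁ ⊗ ⋯ ⊗ aₙ⟫)ᵢ` is multilinear in `(a₁, …, aₙ)`, and its values span `ℂ³`
because the `ψ i` are independent and product vectors span. So it suffices that a multilinear map into `K³` (`K` algebraically closed) whose image
spans a coordinate axis takes a value on a punctured coordinate axis. Splitting off the first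
factor and linearising the others reduces this to a bilinear map `β : V × W → K³` none of whose
values lies on a punctured axis.

If some `β a₀` has rank two, put `κ a = β a w₁ × β a w₂`. A nonzero `κ a` is normal to the range
of `β a` and has no zero coordinate, since otherwise that range would contain an axis. Along a
pencil `z • a₀ + b` the coordinates of `κ` are quadratics in `z` with the same roots, hence
proportional, and so `κ a₀` is normal to every value of `β`. If instead every `β a` and every
`β · w` has rank at most one, all values of `β` lie on one line, which is not an axis.
-/

open Matrix Submodule

section Axial

variable {K ι : Type*} [Field K]

def IsAxial (v : ι → K) : Prop := ∃ x, (∀ i, i ≠ x → v i = 0) ∧ v x ≠ 0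

variable [DecidableEq ι]

lemma isAxial_smul_single {x : ι} {c : K} (hc : c ≠ 0) : IsAxial (c • Pi.single x 1 : ι → K) :=
  ⟨x, fun _ hi => by simp [hi], by simpa⟩

lemma IsAxial.exists_single_mem_span {v : ι → K} (h : IsAxial v) :
    ∃ x, Pi.single x 1 ∈ K ∙ v := by
  obtain ⟨x, hzero, hx⟩ := h
  set c := v x
  have hv : v = c • Pi.single x 1 := by
    ext i
    rcases eq_or_ne i x with rfl | hi
    · simp [c]
    · simp [hzero i hi, hi]
  exact ⟨x, mem_span_singleton.mpr ⟨c⁻¹, by rw [hv, inv_smul_smul₀ hx]⟩⟩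

lemma isAxial_of_single_mem_span {v : ι → K} {x : ι} (h : Pi.single x 1 ∈ K ∙ v) :
    IsAxial v := by
  obtain ⟨c, hc⟩ := mem_span_singleton.mp h
  have hc0 : c ≠ 0 := by
    rintro rfl
    simpa using congrFun hc x
  rw [← inv_smul_smul₀ hc0 v, hc]
  exact isAxial_smul_single (inv_ne_zero hc0)

end Axial

section CrossProduct

/-- Cramer's rule, written with cross products. -/
lemma triple_product_smul {R : Type*} [CommRing R] (u v w z : Fin 3 → R) :
    (w ⬝ᵥ u ⨯₃ v) • z = (z ⬝ᵥ v ⨯₃ w) • u + (z ⬝ᵥ w ⨯₃ u) • v + (z ⬝ᵥ u ⨯₃ v) • w := by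
  ext i
  fin_cases i <;> simp [cross_apply, dotProduct, Fin.sum_univ_three] <;> ring

variable {K : Type*} [Field K]

lemma exists_eq_smul_of_cross_eq_zero {u v : Fin 3 → K} (hv : v ≠ 0) (h : u ⨯₃ v = 0) :
    ∃ c : K, u = c • v := by
  have : ¬ LinearIndependent K ![v, u] := by
    rw [← crossProduct_ne_zero_iff_linearIndependent, not_not, ← cross_anticomm, h, neg_zero]
  rw [LinearIndependent.pair_iff' hv] at this
  push Not at this
  obtain ⟨c, hc⟩ := this
  exact ⟨c, hc.symm⟩

lemma cross_eq_zero_of_cross_eq_zero_of_ne_zero {u v p : Fin 3 → K} (hp : p ≠ 0)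
    (hu : u ⨯₃ p = 0) (hv : v ⨯₃ p = 0) : u ⨯₃ v = 0 := by
  obtain ⟨c, rfl⟩ := exists_eq_smul_of_cross_eq_zero hp hu
  obtain ⟨d, rfl⟩ := exists_eq_smul_of_cross_eq_zero hp hv
  simp [cross_self]

end CrossProduct

section Quadratic

variable {K : Type*} [Field K]

lemma quadratic_eq_mul_of_root {A B C z₁ : K} (hA : A ≠ 0) (h : A * z₁ ^ 2 + B * z₁ + C = 0)
    (z : K) : A * z ^ 2 + B * z + C = A * (z - z₁) * (z - (-B / A - z₁)) := by
  rw [show C = -(A * z₁ ^ 2) - B * z₁ by linear_combination h]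
  field_simp
  ring

lemma quadratic_proportional_of_roots_eq [IsAlgClosed K] {A B C A' B' C' : K} (hA : A ≠ 0)
    (hA' : A' ≠ 0) (h : ∀ z, A * z ^ 2 + B * z + C = 0 ↔ A' * z ^ 2 + B' * z + C' = 0)
    (z : K) : A' * (A * z ^ 2 + B * z + C) = A * (A' * z ^ 2 + B' * z + C') := by
  obtain ⟨z₁, hz₁⟩ := IsAlgClosed.exists_root (Polynomial.C A * .X ^ 2 + .C B * .X + .C C)
    (by rw [Polynomial.degree_quadratic hA]; decide)
  replace hz₁ : A * z₁ ^ 2 + B * z₁ + C = 0 := by simpa using hz₁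
  have hp := quadratic_eq_mul_of_root hA hz₁
  have hq := quadratic_eq_mul_of_root hA' ((h z₁).mp hz₁)
  set r := -B / A - z₁
  set r' := -B' / A' - z₁
  -- each second root is a root of the other quadratic, so the second roots agree
  have hr : r = r' := by
    have h₁ := (h r).mp (by rw [hp]; ring)
    have h₂ := (h r').mpr (by rw [hq]; ring)
    rw [hq] at h₁
    rw [hp] at h₂
    simp only [mul_eq_zero, hA, hA', sub_eq_zero, false_or] at h₁ h₂
    rcases h₁ with h₁ | h₁
    · rcases h₂ with h₂ | h₂ <;> [rw [h₁, h₂]; exact h₂.symm]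
    · exact h₁
  rw [hp, hq, hr]
  ring

lemma exists_quadratic_ne_zero [Infinite K] {A B C : K} (hA : A ≠ 0) :
    ∃ z, A * z ^ 2 + B * z + C ≠ 0 := by
  by_contra! h
  have hzero : Polynomial.C A * .X ^ 2 + .C B * .X + .C C = 0 :=
    Polynomial.funext fun z => by simpa using h z
  exact hA (by simpa using congrArg (Polynomial.coeff · 2) hzero)

end Quadratic

namespace LinearMap

variable {K V W : Type*} [Field K] [AddCommGroup V] [Module K V] [AddCommGroup W] [Module K W]
  (β : V →ₗ[K] W →ₗ[K] (Fin 3 → K))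

lemma cross_eq_zero_of_forall_cross_eq_zero (h₁ : ∀ a w w', β a w ⨯₃ β a w' = 0)
    (h₂ : ∀ a a' w, β a w ⨯₃ β a' w = 0) (a a' : V) (w w' : W) : β a w ⨯₃ β a' w' = 0 := by
  by_cases hp : β a w' = 0
  · by_cases hq : β a' w = 0
    -- then `β (a + a') w = β a w` and `β (a + a') w' = β a' w'`
    · simpa [hp, hq] using h₁ (a + a') w w'
    · exact cross_eq_zero_of_cross_eq_zero_of_ne_zero hq (h₂ a a' w) (h₁ a' w' w)
  · exact cross_eq_zero_of_cross_eq_zero_of_ne_zero hp (h₁ a w w') (h₂ a' a w')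

lemma exists_forall_mem_span_singleton (h₁ : ∀ a w w', β a w ⨯₃ β a w' = 0)
    (h₂ : ∀ a a' w, β a w ⨯₃ β a' w = 0) : ∃ a₀ w₀, ∀ a w, β a w ∈ K ∙ β a₀ w₀ := by
  by_cases h : ∃ a₀ w₀, β a₀ w₀ ≠ 0
  · obtain ⟨a₀, w₀, h₀⟩ := h
    refine ⟨a₀, w₀, fun a w => ?_⟩
    obtain ⟨c, hc⟩ := exists_eq_smul_of_cross_eq_zero h₀
      (cross_eq_zero_of_forall_cross_eq_zero β h₁ h₂ a a₀ w w₀)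
    exact mem_span_singleton.mpr ⟨c, hc.symm⟩
  · push Not at h
    exact ⟨0, 0, fun a w => by simp [h a w]⟩

variable {β} (hβ : ∀ a w, ¬ IsAxial (β a w))
include hβ

lemma smul_single_notMem_range (a : V) {c : K} (hc : c ≠ 0) (x : Fin 3) :
    c • Pi.single x 1 ∉ range (β a) := by
  rintro ⟨w, hw⟩
  exact hβ a w (hw ▸ isAxial_smul_single hc)

lemma triple_product_eq_zero (a : V) (w₁ w₂ w₃ : W) : β a w₃ ⬝ᵥ β a w₁ ⨯₃ β a w₂ = 0 := by
  by_contra hd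
  have key := triple_product_smul (β a w₁) (β a w₂) (β a w₃) (Pi.single 0 1)
  refine smul_single_notMem_range hβ a hd 0 ?_
  rw [key]
  exact add_mem (add_mem (smul_mem _ _ ⟨w₁, rfl⟩) (smul_mem _ _ ⟨w₂, rfl⟩)) (smul_mem _ _ ⟨w₃, rfl⟩)

lemma cross_apply_ne_zero {a : V} {w₁ w₂ : W} (h : β a w₁ ⨯₃ β a w₂ ≠ 0) (x : Fin 3) :
    (β a w₁ ⨯₃ β a w₂) x ≠ 0 := by
  intro hx
  obtain ⟨k, hk⟩ := Function.ne_iff.mp h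
  have key := triple_product_smul (β a w₁) (β a w₂) (Pi.single k 1) (Pi.single x 1)
  simp only [single_dotProduct, one_mul, hx, zero_smul, add_zero] at key
  refine smul_single_notMem_range hβ a hk x ?_
  rw [key]
  exact add_mem (smul_mem _ _ ⟨w₁, rfl⟩) (smul_mem _ _ ⟨w₂, rfl⟩)

lemma dotProduct_eq_zero_of_cross_ne_zero [IsAlgClosed K] {a₀ : V} {w₁ w₂ : W}
    (h₀ : β a₀ w₁ ⨯₃ β a₀ w₂ ≠ 0) (b : V) (w : W) : (β a₀ w₁ ⨯₃ β a₀ w₂) ⬝ᵥ β b w = 0 := by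
  set κ : V → Fin 3 → K := fun a => β a w₁ ⨯₃ β a w₂
  set P := β a₀ w₁ ⨯₃ β b w₂ + β b w₁ ⨯₃ β a₀ w₂
  have hexp : ∀ (z : K) y, κ (z • a₀ + b) y = κ a₀ y * z ^ 2 + P y * z + κ b y := by
    intro z y
    simp only [κ, P, map_add, map_smul, add_apply, smul_apply, Pi.add_apply, Pi.smul_apply,
      smul_eq_mul]
    ring
  have hκ₀ : ∀ y, κ a₀ y ≠ 0 := cross_apply_ne_zero hβ h₀
  have hzero : ∀ (z : K) y, κ (z • a₀ + b) y = 0 → κ (z • a₀ + b) = 0 := fun z y hy => by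
    by_contra h
    exact cross_apply_ne_zero hβ h y hy
  have hprop : ∀ z : K, κ a₀ 0 • κ (z • a₀ + b) = κ (z • a₀ + b) 0 • κ a₀ := by
    intro z
    ext y
    have hroots : ∀ z' : K, κ (z' • a₀ + b) 0 = 0 ↔ κ (z' • a₀ + b) y = 0 := fun z' =>
      ⟨fun h => by rw [hzero z' 0 h]; rfl, fun h => by rw [hzero z' y h]; rfl⟩
    have := quadratic_proportional_of_roots_eq (hκ₀ 0) (hκ₀ y) (by simpa only [hexp] using hroots) z
    simp only [Pi.smul_apply, smul_eq_mul, hexp]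
    linear_combination -this
  obtain ⟨z, hz⟩ := exists_quadratic_ne_zero (hκ₀ 0) (B := P 0) (C := κ b 0)
  rw [← hexp] at hz
  have h₁ := triple_product_eq_zero hβ (z • a₀ + b) w₁ w₂ w
  have h₂ := triple_product_eq_zero hβ a₀ w₁ w₂ w
  have := congrArg (β (z • a₀ + b) w ⬝ᵥ ·) (hprop z)
  simp only [dotProduct_smul, smul_eq_mul] at this
  rw [h₁, mul_zero, map_add, map_smul, add_apply, smul_apply, add_dotProduct, smul_dotProduct, h₂,
    smul_zero, zero_add, dotProduct_comm] at this
  exact (mul_eq_zero.mp this.symm).resolve_left hz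

lemma single_notMem_span_of_cross_ne_zero [IsAlgClosed K] {a₀ : V} {w₁ w₂ : W}
    (h₀ : β a₀ w₁ ⨯₃ β a₀ w₂ ≠ 0) (x : Fin 3) :
    Pi.single x 1 ∉ span K {v | ∃ a w, β a w = v} := by
  intro hx
  have hle : span K {v | ∃ a w, β a w = v} ≤ ker (dotProductBilin K K (β a₀ w₁ ⨯₃ β a₀ w₂)) := by
    rw [span_le]
    rintro _ ⟨a, w, rfl⟩
    exact dotProduct_eq_zero_of_cross_ne_zero hβ h₀ a w
  have := hle hx
  simp only [mem_ker, dotProductBilin_apply_apply, dotProduct_single, mul_one] at this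
  exact cross_apply_ne_zero hβ h₀ x this

end LinearMap

theorem LinearMap.exists_isAxial_of_single_mem_span {K V W : Type*} [Field K] [IsAlgClosed K]
    [AddCommGroup V] [Module K V] [AddCommGroup W] [Module K W]
    (β : V →ₗ[K] W →ₗ[K] (Fin 3 → K)) {x : Fin 3}
    (hx : Pi.single x 1 ∈ span K {v | ∃ a w, β a w = v}) : ∃ a w, IsAxial (β a w) := by
  by_contra! hβ
  by_cases h₁ : ∃ a₀ w₁ w₂, β a₀ w₁ ⨯₃ β a₀ w₂ ≠ 0
  · obtain ⟨a₀, w₁, w₂, h₀⟩ := h₁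
    exact single_notMem_span_of_cross_ne_zero hβ h₀ x hx
  by_cases h₂ : ∃ a₁ a₂ w₀, β a₁ w₀ ⨯₃ β a₂ w₀ ≠ 0
  · obtain ⟨a₁, a₂, w₀, h₀⟩ := h₂
    refine single_notMem_span_of_cross_ne_zero (β := β.flip) (fun w a => hβ a w) h₀ x ?_
    rwa [show {v | ∃ w a, β.flip w a = v} = {v | ∃ a w, β a w = v} from
      Set.ext fun _ => exists_comm]
  push Not at h₁ h₂
  obtain ⟨a₀, w₀, hr⟩ := exists_forall_mem_span_singleton β h₁ h₂
  refine hβ a₀ w₀ (isAxial_of_single_mem_span (span_le.mpr ?_ hx))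
  rintro _ ⟨a, w, rfl⟩
  exact hr a w

universe u

theorem MultilinearMap.exists_isAxial_of_single_mem_span {K : Type*} [Field K] [IsAlgClosed K] :
    ∀ {n : ℕ} {E : Fin n → Type u} [∀ j, AddCommGroup (E j)] [∀ j, Module K (E j)]
      (M : MultilinearMap K E (Fin 3 → K)) {x : Fin 3},
      Pi.single x 1 ∈ span K (Set.range M) → ∃ m, IsAxial (M m)
  | 0, _, _, _, M, _, hx => ⟨default, isAxial_of_single_mem_span (by rwa [Set.range_unique] at hx)⟩
  | n + 1, E, _, _, M, x, hx => by
    by_contra! hM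
    -- `β c` is `M` with its last `n` arguments linearised through finitely supported sums
    let β : ((∀ j : Fin n, E j.succ) →₀ K) →ₗ[K] E 0 →ₗ[K] (Fin 3 → K) :=
      Finsupp.linearCombination K fun m => M.toLinearMap (Fin.cons 0 m) 0
    have hβ : ∀ c a, β c a ∈ span K (Set.range (M.curryLeft a)) := by
      intro c a
      induction c using Finsupp.induction_linear with
      | zero => simp
      | add c c' hc hc' => simpa using add_mem hc hc'
      | single m c =>
        simpa [β] using smul_mem _ c (subset_span (Set.mem_range_self (f := M.curryLeft a) m))
    have hspan : span K (Set.range M) ≤ span K {v | ∃ c a, β c a = v} := by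
      refine span_mono ?_
      rintro _ ⟨m, rfl⟩
      exact ⟨Finsupp.single (Fin.tail m) 1, m 0, by simp [β, Fin.cons_self_tail]⟩
    obtain ⟨c, a, hax⟩ := LinearMap.exists_isAxial_of_single_mem_span β (hspan hx)
    obtain ⟨y, hy⟩ := hax.exists_single_mem_span
    obtain ⟨m, hm⟩ := exists_isAxial_of_single_mem_span (M.curryLeft a)
      ((span_singleton_le_iff_mem _ _).mpr (hβ c a) hy)
    exact hM _ hm

section ProductVectors

variable {n : ℕ} {ι : Fin n → Type*} [∀ j, Fintype (ι j)]

noncomputable def prodVecMultilinear :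
    MultilinearMap ℂ (fun j => EuclideanSpace ℂ (ι j)) (EuclideanSpace ℂ (∀ j, ι j)) :=
  (WithLp.linearEquiv 2 ℂ _).symm.toLinearMap.compMultilinearMap
    ((MultilinearMap.piFamily fun _ => MultilinearMap.mkPiAlgebra ℂ (Fin n) ℂ).compLinearMap
      fun j => (WithLp.linearEquiv 2 ℂ (ι j → ℂ)).toLinearMap)

@[simp]
lemma coe_prodVecMultilinear : ⇑(prodVecMultilinear (ι := ι)) = prodVec := rfl

lemma span_range_prodVec : span ℂ (Set.range (prodVec (ι := ι))) = ⊤ := by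
  classical
  rw [eq_top_iff, ← (EuclideanSpace.basisFun _ ℂ).toBasis.span_eq]
  refine span_mono ?_
  rintro _ ⟨f, rfl⟩
  refine ⟨fun j => EuclideanSpace.single (f j) 1, ?_⟩
  ext g
  simp [prodVec, Finset.prod_boole, funext_iff]

end ProductVectors

lemma range_pi_innerₛₗ_eq_top {𝕜 E ι : Type*} [RCLike 𝕜] [NormedAddCommGroup E]
    [InnerProductSpace 𝕜 E] [Fintype ι] {ψ : ι → E} (h : LinearIndependent 𝕜 ψ) :
    LinearMap.range (LinearMap.pi fun i => innerₛₗ 𝕜 (ψ i)) = ⊤ := by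
  classical
  by_contra hne
  obtain ⟨f, hf, hle⟩ := (LinearMap.range _).exists_le_ker_of_lt_top (lt_top_iff_ne_top.mpr hne)
  let c : ι → 𝕜 := fun i => f fun j => if i = j then 1 else 0
  have hs : ∑ i, star (c i) • ψ i = 0 := by
    rw [← inner_self_eq_zero (𝕜 := 𝕜)]
    have := hle (LinearMap.mem_range_self _ (∑ i, star (c i) • ψ i))
    rw [LinearMap.mem_ker, LinearMap.pi_apply_eq_sum_univ] at this
    rw [← this, sum_inner]
    refine Finset.sum_congr rfl fun i _ => ?_
    rw [inner_smul_left, starRingEnd_apply, star_star, LinearMap.pi_apply, innerₛₗ_apply_apply,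
      smul_eq_mul, mul_comm]
  have hc : ∀ i, c i = 0 := by simpa using Fintype.linearIndependent_iff.mp h _ hs
  refine hf (LinearMap.ext fun v => ?_)
  rw [LinearMap.pi_apply_eq_sum_univ f v]
  exact Finset.sum_eq_zero fun i _ => by rw [show f _ = c i from rfl, hc i, smul_zero]

theorem stmt_19_general {n : ℕ} {ι : Fin n → Type*} [∀ j, Fintype (ι j)]
    (ψ : Fin 3 → EuclideanSpace ℂ (∀ j, ι j))
    (h : LinearIndependent ℂ ψ) :
    ∃ (x : Fin 3) (a : ∀ j, EuclideanSpace ℂ (ι j)),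
      (∀ i, i ≠ x → (inner ℂ (ψ i) (prodVec a) : ℂ) = 0) ∧
      (inner ℂ (ψ x) (prodVec a) : ℂ) ≠ 0 := by
  let M := (LinearMap.pi fun i => innerₛₗ ℂ (ψ i)).compMultilinearMap prodVecMultilinear
  have hM : span ℂ (Set.range M) = ⊤ := by
    rw [LinearMap.coe_compMultilinearMap, Set.range_comp, span_image, coe_prodVecMultilinear,
      span_range_prodVec, Submodule.map_top, range_pi_innerₛₗ_eq_top h]
  obtain ⟨a, x, hx⟩ := MultilinearMap.exists_isAxial_of_single_mem_span M (x := 0) (hM ▸ mem_top)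
  exact ⟨x, a, hx⟩

theorem stmt_19 {n : ℕ} {ι : Fin n → Type*} [∀ j, Fintype (ι j)]
    (hdim : ∀ j, 2 ≤ Fintype.card (ι j))
    (ψ : Fin 3 → EuclideanSpace ℂ (∀ j, ι j))
    (h : LinearIndependent ℂ ψ) :
    ∃ (x : Fin 3) (a : ∀ j, EuclideanSpace ℂ (ι j)),
      (∀ i, i ≠ x → (inner ℂ (ψ i) (prodVec a) : ℂ) = 0) ∧
      (inner ℂ (ψ x) (prodVec a) : ℂ) ≠ 0 :=
  stmt_19_general ψ h
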